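/- arXiv:1908.00106 — 9 statements merged into one kernel-verified Lean document; each statement's English description precedes it below -/
import Mathlib

section
/- For every integer m ≥ 4, there exists an irreducible polynomial of degree m over 𝔽₂ that is not a Mersenne prime, i.e., is not of the form 1 + x^a(x+1)^b with a, b positive integers. -/
open Polynomial

section aux
variable {F : Type*} [Field F]

lemma mersenne_shape_monic (a b : ℕ) : ((X:F[X]) ^ a * (X + 1) ^ b).Monic := by
  have h : ((X:F[X]) + 1) = X + C 1 := by simp
  exact (monic_X_pow a).mul (h ▸ (monic_X_add_C (1:F)).pow b)

lemma mersenne_shape_natDegree' (a b : ℕ) :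
    ((X:F[X]) ^ a * (X + 1) ^ b).natDegree = a + b := by
  have h : ((X:F[X]) + 1) = X + C 1 := by simp
  rw [(monic_X_pow a).natDegree_mul (h ▸ (monic_X_add_C (1:F)).pow b),
    natDegree_X_pow, natDegree_pow, h, natDegree_X_add_C, mul_one]

lemma mersenne_natDegree (a b : ℕ) (ha : 0 < a) :
    ((1 : F[X]) + X ^ a * (X + 1) ^ b).natDegree = a + b := by
  rw [natDegree_add_eq_right_of_natDegree_lt, mersenne_shape_natDegree']
  rw [mersenne_shape_natDegree', natDegree_one]
  omega

lemma mersenne_ne_zero (a b : ℕ) (ha : 0 < a) :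
    ((1 : F[X]) + X ^ a * (X + 1) ^ b) ≠ 0 := by
  intro h
  have := mersenne_natDegree (F := F) a b ha
  rw [h, natDegree_zero] at this
  omega

end aux
lemma mersenne_sq (a b : ℕ) :
    ((1 : (ZMod 2)[X]) + X ^ (2*a) * (X + 1) ^ (2*b)) =
      ((1 : (ZMod 2)[X]) + X ^ a * (X + 1) ^ b) ^ 2 := by
  have h : ((1:(ZMod 2)[X]) + X ^ a * (X + 1) ^ b) ^ 2
      = 1 ^ 2 + (X ^ a * ((X:(ZMod 2)[X]) + 1) ^ b) ^ 2 :=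
    add_pow_char _ _ _
  rw [h, one_pow, mul_pow, ← pow_mul, ← pow_mul, mul_comm a 2, mul_comm b 2]

lemma mersenneOddAB (a b : ℕ) (ha : 0 < a) (hb : 0 < b)
    (h : Irreducible ((1 : (ZMod 2)[X]) + X ^ a * (X + 1) ^ b)) : Odd a ∨ Odd b := by
  by_contra hc
  push_neg at hc
  rw [Nat.not_odd_iff_even, Nat.not_odd_iff_even] at hc
  obtain ⟨⟨a', rfl⟩, ⟨b', rfl⟩⟩ := hc
  rw [← two_mul, ← two_mul, mersenne_sq, sq] at h
  have hu := h.isUnit_or_isUnit rfl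
  have : ¬ IsUnit ((1 : (ZMod 2)[X]) + X ^ a' * (X + 1) ^ b') := by
    apply not_isUnit_of_natDegree_pos
    rw [mersenne_natDegree a' b' (by omega)]
    omega
  tauto
lemma sum_pow_two_Icc (k : ℕ) : ∑ d ∈ Finset.Icc 1 k, 2^d = 2^(k+1) - 2 := by
  induction k with
  | zero => simp
  | succ k ih =>
    rw [Finset.sum_Icc_succ_top (by omega), ih]
    have h2 : 2 ≤ 2^(k+1) := Nat.one_lt_two_pow (by omega)
    have : (2:ℕ)^(k+1+1) = 2^(k+1) + 2^(k+1) := by ring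
    omega

lemma sq_le_two_pow (n : ℕ) (h : 7 ≤ n) : n^2 ≤ 2^(n-1) := by
  induction n, h using Nat.le_induction with
  | base => norm_num
  | succ n hn ih =>
    have h1 : 2*n+1 ≤ n^2 := by nlinarith
    have h2 : (2:ℕ)^n = 2^(n-1) + 2^(n-1) := by
      rw [← two_mul, ← pow_succ']
      congr 1
      omega
    have : (n+1)^2 ≤ 2^n := by rw [h2]; nlinarith
    simpa using this

theorem exists_non_mersenne_irreducible (m : ℕ) (hm : 4 ≤ m) :
    ∃ P : Polynomial (ZMod 2), Irreducible P ∧ P.natDegree = m ∧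
      ¬ ∃ a b : ℕ, 0 < a ∧ 0 < b ∧ P = 1 + X ^ a * (X + 1) ^ b := by
  classical
  haveI : Fact (Nat.Prime 2) := ⟨Nat.prime_two⟩
  set F := GaloisField 2 m with hF
  letI : Fintype F := Fintype.ofFinite F
  have hcard : Fintype.card F = 2 ^ m := by
    have := GaloisField.card 2 m (by omega)
    rwa [Nat.card_eq_fintype_card] at this
  set N : Finset F :=
    (Finset.Icc 1 (m/2)).biUnion (fun d => (X ^ (2^d) - X : F[X]).roots.toFinset) with hNdef
  set A : Finset ℕ := (Finset.Icc 1 (m-1)).filter (fun a => Odd a ∨ Odd (m - a)) with hAdef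
  set T : Finset F :=
    A.biUnion (fun a => ((1 : F[X]) + X ^ a * (X + 1) ^ (m - a)).roots.toFinset) with hTdef
  -- card bounds
  have hN : N.card ≤ 2^(m/2+1) - 2 := by
    refine (Finset.card_biUnion_le).trans ?_
    rw [← sum_pow_two_Icc (m/2)]
    refine Finset.sum_le_sum (fun d hd => ?_)
    refine (Multiset.toFinset_card_le _).trans ?_
    refine (Polynomial.card_roots' _).trans ?_
    have hd1 : 1 ≤ d := (Finset.mem_Icc.mp hd).1
    have h2d : 2 ≤ 2^d := Nat.one_lt_two_pow (by omega)
    have : (X ^ (2^d) - X : F[X]).natDegree = 2^d := by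
      rw [sub_eq_add_neg, natDegree_add_eq_left_of_natDegree_lt]
      · exact natDegree_X_pow _
      · rw [natDegree_neg, natDegree_X, natDegree_X_pow]; omega
    omega
  have hT : T.card ≤ A.card * m := by
    refine (Finset.card_biUnion_le).trans ?_
    rw [Finset.card_eq_sum_ones A, Finset.sum_mul]
    refine Finset.sum_le_sum (fun a ha => ?_)
    have ha1 : 1 ≤ a ∧ a ≤ m - 1 := Finset.mem_Icc.mp (Finset.mem_filter.mp ha).1
    refine (Multiset.toFinset_card_le _).trans ?_
    refine (Polynomial.card_roots' _).trans ?_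
    rw [mersenne_natDegree a (m-a) (by omega), one_mul]
    omega
  have hAcard : A.card * m + 2^(m/2+1) ≤ 2^m + 1 := by
    have hA1 : A.card ≤ m - 1 := by
      refine (Finset.card_filter_le _ _).trans ?_
      rw [Nat.card_Icc]; omega
    have hA2 : Even m → A.card ≤ m/2 := by
      intro hme
      have hsub : A ⊆ (Finset.range (m/2)).image (fun k => 2*k+1) := by
        intro a ha
        rw [hAdef, Finset.mem_filter, Finset.mem_Icc] at ha
        obtain ⟨⟨ha1, ha2⟩, hodd⟩ := ha
        obtain ⟨c, hc⟩ := hme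
        have hodda : ∃ j, a = 2*j+1 := by
          rcases hodd with ⟨k, hk⟩ | ⟨k, hk⟩
          · exact ⟨k, by omega⟩
          · exact ⟨c - k - 1, by omega⟩
        obtain ⟨j, rfl⟩ := hodda
        refine Finset.mem_image.mpr ⟨j, Finset.mem_range.mpr (by omega), rfl⟩
      refine (Finset.card_le_card hsub).trans (Finset.card_image_le.trans ?_)
      rw [Finset.card_range]
    rcases lt_or_ge m 7 with hm7 | hm7
    · have hm456 : m = 4 ∨ m = 5 ∨ m = 6 := by omega
      rcases hm456 with h4 | h5 | h6
      · have hA4 : A.card ≤ 2 := by have := hA2 (by rw [h4]; decide); omega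
        rw [h4]; norm_num; omega
      · rw [h5] at hA1 ⊢; norm_num; omega
      · have hA6 : A.card ≤ 3 := by have := hA2 (by rw [h6]; decide); omega
        rw [h6]; norm_num; omega
    · have h1 : A.card * m ≤ m^2 := by
        have : A.card ≤ m := by omega
        calc A.card * m ≤ m * m := Nat.mul_le_mul_right _ this
        _ = m^2 := (sq m).symm
      have h2 : m^2 ≤ 2^(m-1) := sq_le_two_pow m hm7
      have h3 : (2:ℕ)^(m/2+1) ≤ 2^(m-1) := Nat.pow_le_pow_right (by norm_num) (by omega)
      have h4 : (2:ℕ)^(m-1) + 2^(m-1) = 2^m := by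
        rw [← two_mul, ← pow_succ']; congr 1; omega
      omega
  have hlt : (N ∪ T).card < Fintype.card F := by
    have := Finset.card_union_le N T
    have h2 : 2 ≤ 2^(m/2+1) := Nat.one_lt_two_pow (by omega)
    rw [hcard]
    omega
  obtain ⟨α, hα⟩ : ∃ α : F, α ∉ N ∪ T := by
    by_contra h
    push_neg at h
    have : N ∪ T = Finset.univ := Finset.eq_univ_iff_forall.mpr h
    rw [this, Finset.card_univ] at hlt
    exact lt_irrefl _ hlt
  have hαN : α ∉ N := fun h => hα (Finset.mem_union_left _ h)
  have hαT : α ∉ T := fun h => hα (Finset.mem_union_right _ h)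
  have hint : IsIntegral (ZMod 2) α := IsIntegral.of_finite _ _
  -- degree of minpoly is m
  set P := minpoly (ZMod 2) α with hPdef
  have hirr : Irreducible P := minpoly.irreducible hint
  have hfrk : Module.finrank (ZMod 2) F = m := GaloisField.finrank 2 (by omega)
  have hdm : P.natDegree = m := by
    set d := P.natDegree with hd
    have hd1 : 0 < d := minpoly.natDegree_pos hint
    have hK : Module.finrank (ZMod 2) (IntermediateField.adjoin (ZMod 2) {α}) = d :=
      IntermediateField.adjoin.finrank hint
    have htower : Module.finrank (ZMod 2) (IntermediateField.adjoin (ZMod 2) {α}) *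
        Module.finrank (IntermediateField.adjoin (ZMod 2) {α}) F = Module.finrank (ZMod 2) F :=
      Module.finrank_mul_finrank _ _ _
    have hdvd : d ∣ m := ⟨_, by rw [← hfrk, ← htower, hK]⟩
    by_contra hne
    have hdm2 : d ≤ m / 2 := by
      obtain ⟨k, hk⟩ := hdvd
      have hk2 : 2 ≤ k := by
        by_contra h
        push_neg at h
        have hk01 : k = 0 ∨ k = 1 := by omega
        rcases hk01 with rfl | rfl
        · rw [mul_zero] at hk; omega
        · rw [mul_one] at hk; exact hne hk.symm
      have := Nat.mul_le_mul_left d hk2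
      omega
    -- α is a root of X^(2^d) - X
    letI : Fintype (IntermediateField.adjoin (ZMod 2) {α}) := Fintype.ofFinite _
    have hcardK : Fintype.card (IntermediateField.adjoin (ZMod 2) {α}) = 2 ^ d := by
      rw [Module.card_eq_pow_finrank (K := ZMod 2), ZMod.card, hK]
    have hx : ((⟨α, IntermediateField.mem_adjoin_simple_self (ZMod 2) α⟩ :
        IntermediateField.adjoin (ZMod 2) {α}) : F) ^ (2^d) =
        ((⟨α, IntermediateField.mem_adjoin_simple_self (ZMod 2) α⟩ :
        IntermediateField.adjoin (ZMod 2) {α}) : F) := by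
      rw [← SubmonoidClass.coe_pow]
      congr 1
      rw [← hcardK]
      exact FiniteField.pow_card _
    have hroot : α ^ (2^d) = α := hx
    apply hαN
    rw [hNdef, Finset.mem_biUnion]
    refine ⟨d, Finset.mem_Icc.mpr ⟨hd1, hdm2⟩, ?_⟩
    rw [Multiset.mem_toFinset, Polynomial.mem_roots']
    constructor
    · intro h0
      have h2d : 2 ≤ 2^d := Nat.one_lt_two_pow (by omega)
      have : (X ^ (2^d) - X : F[X]).natDegree = 2^d := by
        rw [sub_eq_add_neg, natDegree_add_eq_left_of_natDegree_lt]
        · exact natDegree_X_pow _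
        · rw [natDegree_neg, natDegree_X, natDegree_X_pow]; omega
      rw [h0, natDegree_zero] at this
      omega
    · simp [Polynomial.IsRoot, hroot]
  refine ⟨P, hirr, hdm, ?_⟩
  rintro ⟨a, b, ha, hb, hPab⟩
  have hab : a + b = m := by rw [← hdm, hPab, mersenne_natDegree a b ha]
  have hodd : Odd a ∨ Odd b := mersenneOddAB a b ha hb (hPab ▸ hirr)
  apply hαT
  rw [hTdef, Finset.mem_biUnion]
  have haA : a ∈ A := by
    rw [hAdef, Finset.mem_filter, Finset.mem_Icc]
    refine ⟨⟨by omega, by omega⟩, ?_⟩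
    have : m - a = b := by omega
    rw [this]; exact hodd
  refine ⟨a, haA, ?_⟩
  rw [Multiset.mem_toFinset, Polynomial.mem_roots']
  have hb' : m - a = b := by omega
  constructor
  · rw [hb']; exact mersenne_ne_zero a b ha
  · have h0 := minpoly.aeval (ZMod 2) α
    rw [← hPdef, hPab] at h0
    simp only [map_add, map_mul, map_pow, aeval_X, map_one] at h0
    rw [hb']
    simp only [Polynomial.IsRoot, eval_add, eval_one, eval_mul, eval_pow, eval_X]
    convert h0 using 2
end

section
/- If 1 + x^c(x+1)^d ∈ 𝔽₂[x] is irreducible with c, d ≥ 1, then gcd(c, d) = 1. -/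
open Polynomial

theorem gcd_eq_one_of_irreducible (c d : ℕ) (hc : 1 ≤ c) (hd : 1 ≤ d)
    (h : Irreducible ((1 : Polynomial (ZMod 2)) + X ^ c * (X + 1) ^ d)) :
    Nat.gcd c d = 1 := by
  by_contra hg
  obtain ⟨c', hc'⟩ := Nat.gcd_dvd_left c d
  obtain ⟨d', hd'⟩ := Nat.gcd_dvd_right c d
  have hg0 : Nat.gcd c d ≠ 0 := by
    intro h0
    have := Nat.eq_zero_of_gcd_eq_zero_left h0
    omega
  have hg2 : 2 ≤ Nat.gcd c d := by omega
  have hc1 : 1 ≤ c' := by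
    rcases Nat.eq_zero_or_pos c' with h0 | h0
    · subst h0; simp at hc'; omega
    · exact h0
  have hd1 : 1 ≤ d' := by
    rcases Nat.eq_zero_or_pos d' with h0 | h0
    · subst h0; simp at hd'; omega
    · exact h0
  set f : Polynomial (ZMod 2) := X ^ c' * (X + 1) ^ d' with hfdef
  have h2 : (2 : Polynomial (ZMod 2)) = 0 := by
    have : (2 : Polynomial (ZMod 2)) = C 2 := (map_ofNat C 2).symm
    rw [this, show (2 : ZMod 2) = 0 from rfl, map_zero]
  have hce : c' * Nat.gcd c d = c := by rw [mul_comm]; exact hc'.symm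
  have hde : d' * Nat.gcd c d = d := by rw [mul_comm]; exact hd'.symm
  have hfg : f ^ Nat.gcd c d = X ^ c * (X + 1) ^ d := by
    rw [hfdef, mul_pow, ← pow_mul, ← pow_mul, hce, hde]
  have hPe : (1 : Polynomial (ZMod 2)) + X ^ c * (X + 1) ^ d =
      f ^ Nat.gcd c d - 1 := by
    rw [← hfg]; linear_combination h2
  have hP : (1 : Polynomial (ZMod 2)) + X ^ c * (X + 1) ^ d =
      (∑ i ∈ Finset.range (Nat.gcd c d), f ^ i) * (f - 1) := by
    rw [geom_sum_mul, hPe]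
  have hX1 : (X + 1 : Polynomial (ZMod 2)).Monic := by
    simpa using monic_X_add_C (1 : ZMod 2)
  have hfdeg : f.natDegree = c' + d' := by
    rw [hfdef, (monic_X_pow c').natDegree_mul (hX1.pow d'), natDegree_X_pow,
      natDegree_pow]
    have : (X + 1 : Polynomial (ZMod 2)).natDegree = 1 := by
      simpa using natDegree_X_add_C (1 : ZMod 2)
    rw [this, mul_one]
  have hf1deg : (f - 1).natDegree = c' + d' := by
    have e : f - 1 = f - C 1 := by simp
    rw [e, natDegree_sub_C, hfdeg]
  have hPdeg : ((1 : Polynomial (ZMod 2)) + X ^ c * (X + 1) ^ d).natDegree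
      = Nat.gcd c d * (c' + d') := by
    rw [hPe]
    have e : f ^ Nat.gcd c d - 1 = f ^ Nat.gcd c d - C 1 := by simp
    rw [e, natDegree_sub_C, natDegree_pow, hfdeg]
  have hPne : (1 : Polynomial (ZMod 2)) + X ^ c * (X + 1) ^ d ≠ 0 := h.ne_zero
  have hSne : (∑ i ∈ Finset.range (Nat.gcd c d), f ^ i) ≠ 0 := by
    intro h0
    rw [hP, h0, zero_mul] at hPne
    exact hPne rfl
  have hf1ne : (f - 1 : Polynomial (ZMod 2)) ≠ 0 := by
    intro h0
    rw [hP, h0, mul_zero] at hPne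
    exact hPne rfl
  rcases h.isUnit_or_isUnit hP with hu | hu
  · have hS0 : (∑ i ∈ Finset.range (Nat.gcd c d), f ^ i).natDegree = 0 :=
      natDegree_eq_zero_of_isUnit hu
    have hq := hPdeg
    rw [hP, natDegree_mul hSne hf1ne, hS0, hf1deg, zero_add] at hq
    nlinarith
  · have := natDegree_eq_zero_of_isUnit hu
    rw [hf1deg] at this
    omega
end

section
/- Let P, Q ∈ 𝔽₂[x] with P irreducible of degree r such that 2^r − 1 is a prime number, let p be a prime, and suppose P does not divide Q(Q+1) but P divides Q^p + 1. Then 2^r − 1 = p. -/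
open Polynomial

theorem mersenne_eq_p_of_dvd (P Q : Polynomial (ZMod 2)) (r p : ℕ)
    (hP : Irreducible P) (hr : P.natDegree = r) (hrp : Nat.Prime (2 ^ r - 1))
    (hp : Nat.Prime p) (hnd : ¬ P ∣ Q * (Q + 1)) (hd : P ∣ Q ^ p + 1) :
    2 ^ r - 1 = p := by
  have : Fact (Irreducible P) := ⟨hP⟩
  set K := AdjoinRoot P
  let q : K := AdjoinRoot.mk P Q
  have hq0 : q ≠ 0 := by
    intro h
    exact hnd (dvd_mul_of_dvd_left ((AdjoinRoot.mk_eq_zero).mp h) _)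
  have hq1 : q ≠ 1 := by
    intro h
    apply hnd
    apply dvd_mul_of_dvd_right
    have hchar : CharP K 2 :=
      charP_of_injective_algebraMap (algebraMap (ZMod 2) K).injective 2
    have : AdjoinRoot.mk P (Q + 1) = 0 := by
      rw [map_add, map_one, show ((AdjoinRoot.mk P) Q : K) = q from rfl, h,
        CharTwo.add_self_eq_zero]
    exact (AdjoinRoot.mk_eq_zero).mp this
  have hchar : CharP K 2 :=
    charP_of_injective_algebraMap (algebraMap (ZMod 2) K).injective 2
  have hqp : q ^ p = 1 := by
    have h0 : q ^ p + 1 = 0 := by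
      have := (AdjoinRoot.mk_eq_zero).mpr hd
      rwa [map_add, map_one, map_pow] at this
    have := eq_neg_of_add_eq_zero_left h0
    simpa [CharTwo.neg_eq] using this
  have hord : orderOf q = p := by
    have hdvd : orderOf q ∣ p := orderOf_dvd_of_pow_eq_one hqp
    rcases (Nat.Prime.eq_one_or_self_of_dvd hp _ hdvd) with h1 | h1
    · exact absurd (orderOf_eq_one_iff.mp h1) hq1
    · exact h1
  -- finiteness and cardinality
  have hPne : P ≠ 0 := hP.ne_zero
  let pb := AdjoinRoot.powerBasis hPne
  have : Module.Finite (ZMod 2) K := Module.Finite.of_basis pb.basis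
  have : Fintype K := Module.fintypeOfFintype pb.basis
  have hcard : Fintype.card K = 2 ^ r := by
    rw [Module.card_fintype pb.basis, ZMod.card]
    congr 1
    rw [AdjoinRoot.powerBasis_dim, hr]
    simp
  have hpow : q ^ (2 ^ r - 1) = 1 := by
    rw [← hcard]
    exact FiniteField.pow_card_sub_one_eq_one q hq0
  have hdvd2 : p ∣ 2 ^ r - 1 := hord ▸ orderOf_dvd_of_pow_eq_one hpow
  rcases (Nat.Prime.eq_one_or_self_of_dvd hrp _ hdvd2) with h1 | h1
  · exact absurd h1 hp.ne_one
  · exact h1.symm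
end

section
/- Let p = 2^m − 1 be a Mersenne prime number with m prime, and let M = 1 + x^a(x+1)^b be a Mersenne prime polynomial over 𝔽₂. Then every irreducible polynomial P ≠ M of degree m over 𝔽₂ divides σ(M^{p−1}) = 1 + M + ⋯ + M^{p−1}. -/
/-!
In `𝔽₂[X]/(P) ≅ 𝔽_{2^m}` the residue `y` of `M` is neither `0` (distinct irreducible polynomials
over `𝔽₂` are monic, hence coprime) nor `1` (`M - 1 = X^a (X+1)^b` has only linear factors, while
`deg P = m ≥ 2`). So `y ^ p = 1` with `y ≠ 1`, and `(y - 1)(1 + y + ⋯ + y^{p-1}) = y ^ p - 1 = 0`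
forces the geometric sum to vanish.
-/

open Polynomial

theorem geom_sum_natCard_sub_one_eq_zero {F : Type*} [Field F] [Finite F] {x : F}
    (hx0 : x ≠ 0) (hx1 : x ≠ 1) : ∑ i ∈ Finset.range (Nat.card F - 1), x ^ i = 0 := by
  have := Fintype.ofFinite F
  have hpow : x ^ (Nat.card F - 1) = 1 := by
    rw [Nat.card_eq_fintype_card]
    exact FiniteField.pow_card_sub_one_eq_one x hx0
  have h := geom_sum_mul x (Nat.card F - 1)
  rw [hpow, sub_self] at h
  exact (mul_eq_zero.mp h).resolve_right (sub_ne_zero.mpr hx1)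

theorem AdjoinRoot.natCard_eq_pow_natDegree {K : Type*} [Field K] {P : K[X]} (hP : P ≠ 0) :
    Nat.card (AdjoinRoot P) = Nat.card K ^ P.natDegree := by
  let pb := AdjoinRoot.powerBasis hP
  have := pb.finite
  rw [Module.natCard_eq_pow_finrank (K := K), pb.finrank, AdjoinRoot.powerBasis_dim]

theorem Irreducible.dvd_geom_sum_of_not_dvd {K : Type*} [Field K] [Finite K] {P Q : K[X]}
    (hP : Irreducible P) (hPQ : ¬ P ∣ Q) (hPQ1 : ¬ P ∣ Q - 1) :
    P ∣ ∑ i ∈ Finset.range (Nat.card K ^ P.natDegree - 1), Q ^ i := by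
  have := Fact.mk hP
  have := (AdjoinRoot.powerBasis hP.ne_zero).finite
  have := Module.finite_of_finite K (M := AdjoinRoot P)
  rw [← AdjoinRoot.mk_eq_zero, map_sum, ← AdjoinRoot.natCard_eq_pow_natDegree hP.ne_zero]
  simp only [map_pow]
  refine geom_sum_natCard_sub_one_eq_zero (mt AdjoinRoot.mk_eq_zero.mp hPQ) fun h ↦ hPQ1 ?_
  rw [← AdjoinRoot.mk_eq_zero, map_sub, h, map_one, sub_self]

theorem Irreducible.not_dvd_X_pow_mul_X_add_one_pow {K : Type*} [Field K] {P : K[X]}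
    (hP : Irreducible P) (hdeg : 1 < P.natDegree) (a b : ℕ) : ¬ P ∣ X ^ a * (X + 1) ^ b := by
  have hlin : ∀ c : K, ¬ P ∣ X + C c := fun c h ↦ by
    have := natDegree_le_of_dvd h (X_add_C_ne_zero c)
    rw [natDegree_X_add_C] at this
    omega
  intro h
  rcases hP.prime.dvd_mul.mp h with h | h
  · exact hlin 0 (by simpa using hP.prime.dvd_of_dvd_pow h)
  · exact hlin 1 (by simpa using hP.prime.dvd_of_dvd_pow h)

theorem Polynomial.monic_of_ne_zero_zmod_two {P : (ZMod 2)[X]} (hP : P ≠ 0) : P.Monic :=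
  (by decide : ∀ c : ZMod 2, c ≠ 0 → c = 1) _ (leadingCoeff_ne_zero.mpr hP)

theorem any_irreducible_divides_sigma_general (m p : ℕ) (hm : Nat.Prime m)
    (hpm : p = 2 ^ m - 1)
    (M : Polynomial (ZMod 2)) (hM : Irreducible M)
    (a b : ℕ) (hMab : M = 1 + X ^ a * (X + 1) ^ b)
    (P : Polynomial (ZMod 2)) (hP : Irreducible P) (hdeg : P.natDegree = m)
    (hne : P ≠ M) :
    P ∣ ∑ i ∈ Finset.range p, M ^ i := by
  have hPM : ¬ P ∣ M := fun h ↦ hne <| eq_of_monic_of_associated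
    (monic_of_ne_zero_zmod_two hP.ne_zero) (monic_of_ne_zero_zmod_two hM.ne_zero)
    (hP.associated_of_dvd hM h)
  have hPM1 : ¬ P ∣ M - 1 := by
    rw [hMab, add_sub_cancel_left]
    exact hP.not_dvd_X_pow_mul_X_add_one_pow (hdeg ▸ hm.one_lt) a b
  simpa [hpm, hdeg] using hP.dvd_geom_sum_of_not_dvd hPM hPM1

theorem any_irreducible_divides_sigma (m p : ℕ) (hm : Nat.Prime m)
    (hpm : p = 2 ^ m - 1) (hp : Nat.Prime p)
    (M : Polynomial (ZMod 2)) (hM : Irreducible M)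
    (a b : ℕ) (ha : 0 < a) (hb : 0 < b) (hMab : M = 1 + X ^ a * (X + 1) ^ b)
    (P : Polynomial (ZMod 2)) (hP : Irreducible P) (hdeg : P.natDegree = m)
    (hne : P ≠ M) :
    P ∣ ∑ i ∈ Finset.range p, M ^ i :=
  any_irreducible_divides_sigma_general m p hm hpm M hM a b hMab P hP hdeg hne
end

section
/- Let M be a Mersenne prime polynomial over 𝔽₂ and p a prime. If r ≥ 1 is such that 2^r − 1 is a prime number different from p, then no irreducible polynomial of degree r over 𝔽₂ divides σ(M^{p−1}) = 1 + M + ⋯ + M^{p−1}. -/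
open Polynomial

theorem no_irreducible_of_deg_r_divides (M : Polynomial (ZMod 2))
    (hM : Irreducible M)
    (a b : ℕ) (ha : 0 < a) (hb : 0 < b) (hMab : M = 1 + X ^ a * (X + 1) ^ b)
    (p r : ℕ) (hp : Nat.Prime p) (hr : 1 ≤ r) (hrp : Nat.Prime (2 ^ r - 1))
    (hne : 2 ^ r - 1 ≠ p) :
    ∀ P : Polynomial (ZMod 2), Irreducible P → P.natDegree = r →
      ¬ P ∣ ∑ i ∈ Finset.range p, M ^ i := by
  intro P hPirr hPdeg hdvd
  have hM1 : M - 1 = X ^ a * (X + 1) ^ b := by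
    rw [hMab]; ring
  by_cases hP1 : P ∣ M - 1
  · -- then P divides X^a * (X+1)^b, so P has degree 1, r = 1, but 2^1-1=1 not prime
    rw [hM1] at hP1
    have hprime : Prime P := hPirr.prime
    have : P ∣ X ∨ P ∣ (X + 1 : Polynomial (ZMod 2)) := by
      rcases hprime.dvd_mul.mp hP1 with h | h
      · exact Or.inl (hprime.dvd_of_dvd_pow h)
      · exact Or.inr (hprime.dvd_of_dvd_pow h)
    have hr1 : r ≤ 1 := by
      rcases this with h | h
      · have := Polynomial.natDegree_le_of_dvd h (X_ne_zero)
        simpa [hPdeg] using this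
      · have hne0 : (X + 1 : Polynomial (ZMod 2)) ≠ 0 := by
          intro hc
          have := congrArg (Polynomial.coeff · 1) hc
          simp [Polynomial.coeff_one] at this
        have := Polynomial.natDegree_le_of_dvd h hne0
        have hd : (X + 1 : Polynomial (ZMod 2)).natDegree = 1 := by
          compute_degree!
        omega
    have : r = 1 := le_antisymm hr1 hr
    rw [this] at hrp
    norm_num at hrp
  · haveI := Fact.mk hPirr
    haveI := Fact.mk hp
    set K := AdjoinRoot P
    have hPne : P ≠ 0 := hPirr.ne_zero
    let pb := AdjoinRoot.powerBasis hPne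
    haveI : Module.Finite (ZMod 2) K := pb.finite
    haveI : Finite K := Module.finite_of_finite (ZMod 2)
    haveI : Fintype K := Fintype.ofFinite K
    have hcard : Fintype.card K = 2 ^ r := by
      rw [Module.card_eq_pow_finrank (K := ZMod 2) (V := K), pb.finrank, AdjoinRoot.powerBasis_dim, hPdeg, ZMod.card]
    set m : K := AdjoinRoot.mk P M with hm
    have hσ : (∑ i ∈ Finset.range p, m ^ i) = 0 := by
      have : AdjoinRoot.mk P (∑ i ∈ Finset.range p, M ^ i) = 0 :=
        AdjoinRoot.mk_eq_zero.mpr hdvd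
      simpa [map_sum, map_pow] using this
    have hmp : m ^ p = 1 := by
      have := geom_sum_mul m p
      rw [hσ, zero_mul] at this
      exact sub_eq_zero.mp this.symm
    have hm1 : m ≠ 1 := by
      intro hc
      apply hP1
      rw [← AdjoinRoot.mk_eq_zero]
      rw [map_sub, map_one]
      rw [← hm, hc, sub_self]
    have horder : orderOf m = p := orderOf_eq_prime hmp hm1
    have hm0 : IsUnit m := by
      rw [isUnit_iff_ne_zero]
      intro hc
      rw [hc, zero_pow hp.pos.ne'] at hmp
      exact zero_ne_one hmp
    obtain ⟨u, hu⟩ := hm0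
    have hou : orderOf u = p := by
      rw [← horder, ← hu, orderOf_units]
    have hdvd' : p ∣ Fintype.card Kˣ := by
      rw [← hou]; exact orderOf_dvd_card
    rw [Fintype.card_units, hcard] at hdvd'
    have : p = 2 ^ r - 1 := ((Nat.prime_dvd_prime_iff_eq hp hrp).mp hdvd')
    exact hne this.symm
end

section
/- In 𝔽₂[x], x² + x + 1 divides σ((x³+x+1)^{2h}) = 1 + (x³+x+1) + ⋯ + (x³+x+1)^{2h} if and only if 3 divides 2h + 1. -/
/-!
Let `ω` be the class of `X` modulo `X ^ 2 + X + 1`. Over `𝔽₂` we have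
`X ^ 3 + X + 1 ≡ X`, so `σ((X ^ 3 + X + 1) ^ (n - 1)) ≡ 1 + ω + ⋯ + ω ^ (n - 1)`. Every block of
three consecutive terms `ω ^ m (1 + ω + ω ^ 2)` vanishes, leaving `0`, `1` or `1 + ω` according to
`n mod 3`; the last two are nonzero because `1` and `1 + X` have degree below `2`.
-/

open Polynomial Finset

theorem geom_sum_range_eq_geom_sum_range_mod_three {R : Type*} [CommRing R] {ω : R}
    (hω : ω ^ 2 + ω + 1 = 0) (n : ℕ) :
    ∑ i ∈ range n, ω ^ i = ∑ i ∈ range (n % 3), ω ^ i := by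
  induction n using Nat.strong_induction_on with
  | _ n ih =>
    obtain hn | hn := lt_or_ge n 3
    · rw [Nat.mod_eq_of_lt hn]
    · obtain ⟨m, rfl⟩ := Nat.exists_eq_add_of_le' hn
      rw [Nat.add_mod_right, ← ih m (by omega), sum_range_succ, sum_range_succ, sum_range_succ]
      linear_combination ω ^ m * hω

theorem X_pow_three_add_X_add_one_eq :
    (X ^ 3 + X + 1 : (ZMod 2)[X]) = X + (X + 1) * (X ^ 2 + X + 1) := by
  linear_combination (-X ^ 2 - X) * (CharTwo.two_eq_zero : (2 : (ZMod 2)[X]) = 0)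

namespace AdjoinRoot

theorem root_sq_add_root_add_one :
    root (X ^ 2 + X + 1 : (ZMod 2)[X]) ^ 2 + root (X ^ 2 + X + 1) + 1 = 0 := by
  have h := mk_self (f := (X ^ 2 + X + 1 : (ZMod 2)[X]))
  rwa [map_add, map_add, map_pow, mk_X, map_one] at h

theorem mk_X_pow_three_add_X_add_one :
    mk (X ^ 2 + X + 1 : (ZMod 2)[X]) (X ^ 3 + X + 1) = root (X ^ 2 + X + 1) := by
  rw [X_pow_three_add_X_add_one_eq, map_add, map_mul, mk_self, mul_zero, add_zero, mk_X]

end AdjoinRoot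

theorem X_sq_add_X_add_one_dvd_geom_sum_iff_mod_three (n : ℕ) :
    (X ^ 2 + X + 1 : (ZMod 2)[X]) ∣ ∑ i ∈ range n, (X ^ 3 + X + 1) ^ i ↔
      (X ^ 2 + X + 1 : (ZMod 2)[X]) ∣ ∑ i ∈ range (n % 3), X ^ i := by
  simp only [← AdjoinRoot.mk_eq_zero, map_sum, map_pow, AdjoinRoot.mk_X_pow_three_add_X_add_one,
    AdjoinRoot.mk_X]
  rw [geom_sum_range_eq_geom_sum_range_mod_three AdjoinRoot.root_sq_add_root_add_one]

theorem X_sq_add_X_add_one_dvd_geom_sum_X_iff {r : ℕ} (hr : r < 3) :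
    (X ^ 2 + X + 1 : (ZMod 2)[X]) ∣ ∑ i ∈ range r, X ^ i ↔ r = 0 := by
  have hdeg : (X ^ 2 + X + 1 : (ZMod 2)[X]).degree = 2 := by compute_degree!
  interval_cases r
  · simp
  · rw [sum_range_one, pow_zero]
    refine iff_of_false (not_dvd_of_degree_lt one_ne_zero ?_) one_ne_zero
    rw [hdeg, degree_one]
    norm_num
  · have hdeg₁ : (1 + X : (ZMod 2)[X]).degree = 1 := by compute_degree!
    rw [sum_range_succ, sum_range_one, pow_zero, pow_one]
    refine iff_of_false (not_dvd_of_degree_lt (fun h ↦ by simp [h] at hdeg₁) ?_) two_ne_zero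
    rw [hdeg, hdeg₁]
    norm_num

theorem deg2_dvd_sigma_iff_general (h : ℕ) :
    ((X ^ 2 + X + 1 : Polynomial (ZMod 2)) ∣
        ∑ i ∈ Finset.range (2 * h + 1), (X ^ 3 + X + 1 : Polynomial (ZMod 2)) ^ i) ↔
      3 ∣ 2 * h + 1 := by
  rw [X_sq_add_X_add_one_dvd_geom_sum_iff_mod_three,
    X_sq_add_X_add_one_dvd_geom_sum_X_iff (Nat.mod_lt _ three_pos), Nat.dvd_iff_mod_eq_zero]

theorem deg2_dvd_sigma_iff (h : ℕ) (hh : 1 ≤ h) :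
    ((X ^ 2 + X + 1 : Polynomial (ZMod 2)) ∣
        ∑ i ∈ Finset.range (2 * h + 1), (X ^ 3 + X + 1 : Polynomial (ZMod 2)) ^ i) ↔
      3 ∣ 2 * h + 1 :=
  deg2_dvd_sigma_iff_general h
end

section
/- In 𝔽₂[x], x³ + x² + 1 divides σ((x³+x+1)^{2h}) = 1 + (x³+x+1) + ⋯ + (x³+x+1)^{2h} if and only if 7 divides 2h + 1. -/
open Polynomial Finset

namespace Deg3Aux

noncomputable def p : Polynomial (ZMod 2) := X ^ 3 + X ^ 2 + 1
noncomputable def q : Polynomial (ZMod 2) := X ^ 3 + X + 1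

lemma htwo : (2 : Polynomial (ZMod 2)) = 0 := by
  have : ((2:ℕ) : Polynomial (ZMod 2)) = 0 := CharP.cast_eq_zero _ 2
  exact_mod_cast this

lemma hpdeg : p.natDegree = 3 := by unfold p; compute_degree!

lemma key7 : p ∣ q ^ 7 - 1 :=
  ⟨X ^ 18 + X ^ 17 + X ^ 11 + X ^ 10 + X ^ 4 + X ^ 3 + X ^ 2 + X, by
    unfold p q
    linear_combination (-1 * X ^ 20 + 3 * X ^ 19 + 3 * X ^ 18 + 10 * X ^ 17 + 21 * X ^ 16 +
      28 * X ^ 15 + 52 * X ^ 14 + 69 * X ^ 13 + 87 * X ^ 12 + 115 * X ^ 11 + 122 * X ^ 10 +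
      126 * X ^ 9 + 126 * X ^ 8 + 105 * X ^ 7 + 83 * X ^ 6 + 62 * X ^ 5 + 37 * X ^ 4 +
      20 * X ^ 3 + 10 * X ^ 2 + 3 * X : Polynomial (ZMod 2)) * htwo⟩

lemma cop : IsCoprime p (q - 1) :=
  ⟨X ^ 2 + X + 1, X ^ 2 + 1, by
    unfold p q
    linear_combination (X ^ 5 + X ^ 4 + 2 * X ^ 3 + X ^ 2 + X :
      Polynomial (ZMod 2)) * htwo⟩

lemma nd {f c s : Polynomial (ZMod 2)} (hf : f = p * c + s) (hs0 : s ≠ 0)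
    (hsd : s.natDegree ≤ 2) : ¬ p ∣ f := by
  intro hd
  rw [hf] at hd
  have hps : p ∣ s := (dvd_add_right (Dvd.intro _ rfl)).mp hd
  have := Polynomial.natDegree_le_of_dvd hps hs0
  rw [hpdeg] at this
  omega

lemma coeff_ne {s : Polynomial (ZMod 2)} (k : ℕ) (hk : s.coeff k = 1) : s ≠ 0 := by
  intro h0
  rw [h0] at hk
  simp at hk

lemma nd1 : ¬ p ∣ q ^ 1 - 1 := by
  refine nd (c := 1) (s := X ^ 2 + X + 1) ?_ (coeff_ne 0 (by simp)) (by compute_degree!)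
  unfold p q
  linear_combination (-1 * X ^ 2 - 1 : Polynomial (ZMod 2)) * htwo

lemma nd2 : ¬ p ∣ q ^ 2 - 1 := by
  refine nd (c := X ^ 3 + X ^ 2 + X) (s := X) ?_ X_ne_zero (by compute_degree!)
  unfold p q
  linear_combination (-1 * X ^ 5 : Polynomial (ZMod 2)) * htwo

lemma nd3 : ¬ p ∣ q ^ 3 - 1 := by
  refine nd (c := X ^ 6 + X ^ 5) (s := X ^ 2 + X) ?_ (coeff_ne 1 (by simp)) (by compute_degree!)
  unfold p q
  linear_combination (-1 * X ^ 8 + X ^ 7 + X ^ 6 + X ^ 5 + 3 * X ^ 4 + 2 * X ^ 3 + X ^ 2 + X :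
    Polynomial (ZMod 2)) * htwo

lemma nd4 : ¬ p ∣ q ^ 4 - 1 := by
  refine nd (c := X ^ 9 + X ^ 8 + X ^ 7 + X ^ 5 + X ^ 2) (s := X ^ 2) ?_
    (coeff_ne 2 (by simp)) (by compute_degree!)
  unfold p q
  linear_combination (-1 * X ^ 11 + X ^ 10 + X ^ 9 + 2 * X ^ 8 + 5 * X ^ 7 + 5 * X ^ 6 +
    5 * X ^ 5 + 6 * X ^ 4 + 4 * X ^ 3 + 2 * X ^ 2 + 2 * X : Polynomial (ZMod 2)) * htwo

lemma nd5 : ¬ p ∣ q ^ 5 - 1 := by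
  refine nd (c := X ^ 12 + X ^ 11 + X ^ 8 + X ^ 7 + X ^ 6 + X ^ 3 + X + 1) (s := X ^ 2 + 1) ?_
    (coeff_ne 0 (by simp)) (by compute_degree!)
  unfold p q
  linear_combination (-1 * X ^ 14 + 2 * X ^ 13 + 2 * X ^ 12 + 4 * X ^ 11 + 9 * X ^ 10 +
    9 * X ^ 9 + 14 * X ^ 8 + 17 * X ^ 7 + 14 * X ^ 6 + 15 * X ^ 5 + 12 * X ^ 4 + 6 * X ^ 3 +
    4 * X ^ 2 + 2 * X - 1 : Polynomial (ZMod 2)) * htwo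

lemma nd6 : ¬ p ∣ q ^ 6 - 1 := by
  refine nd (c := X ^ 15 + X ^ 14 + X ^ 13 + X ^ 10 + X + 1) (s := X + 1) ?_
    (coeff_ne 0 (by simp)) (by compute_degree!)
  unfold p q
  linear_combination (-1 * X ^ 17 + 2 * X ^ 16 + 2 * X ^ 15 + 7 * X ^ 14 + 14 * X ^ 13 +
    17 * X ^ 12 + 30 * X ^ 11 + 37 * X ^ 10 + 40 * X ^ 9 + 48 * X ^ 8 + 45 * X ^ 7 +
    38 * X ^ 6 + 33 * X ^ 5 + 22 * X ^ 4 + 12 * X ^ 3 + 7 * X ^ 2 + 2 * X - 1 :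
    Polynomial (ZMod 2)) * htwo

lemma main_dvd_iff (n : ℕ) : p ∣ q ^ n - 1 ↔ 7 ∣ n := by
  constructor
  · intro hn
    have h7m : p ∣ (q ^ 7) ^ (n / 7) - 1 :=
      key7.trans (by simpa using sub_dvd_pow_sub_pow (q ^ 7) 1 (n / 7))
    have hpow : q ^ (n % 7) * q ^ (7 * (n / 7)) = q ^ n := by
      rw [← pow_add, Nat.mod_add_div]
    have hsplit : q ^ (n % 7) - 1 =
        (q ^ n - 1) - q ^ (n % 7) * ((q ^ 7) ^ (n / 7) - 1) := by
      rw [← pow_mul, mul_sub, hpow, mul_one]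
      ring
    have hr : p ∣ q ^ (n % 7) - 1 := by
      rw [hsplit]
      exact dvd_sub hn (h7m.mul_left _)
    have hlt : n % 7 < 7 := Nat.mod_lt _ (by norm_num)
    set r := n % 7 with hrdef
    interval_cases r
    · exact Nat.dvd_of_mod_eq_zero hrdef.symm
    · exact absurd hr nd1
    · exact absurd hr nd2
    · exact absurd hr nd3
    · exact absurd hr nd4
    · exact absurd hr nd5
    · exact absurd hr nd6
  · rintro ⟨m, rfl⟩
    rw [pow_mul]
    exact key7.trans (by simpa using sub_dvd_pow_sub_pow (q ^ 7) 1 m)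

end Deg3Aux

open Deg3Aux in
theorem deg3_dvd_sigma_iff (h : ℕ) (hh : 1 ≤ h) :
    ((X ^ 3 + X ^ 2 + 1 : Polynomial (ZMod 2)) ∣
        ∑ i ∈ Finset.range (2 * h + 1), (X ^ 3 + X + 1 : Polynomial (ZMod 2)) ^ i) ↔
      7 ∣ 2 * h + 1 := by
  have geom : (∑ i ∈ Finset.range (2 * h + 1), q ^ i) * (q - 1) = q ^ (2 * h + 1) - 1 :=
    geom_sum_mul q (2 * h + 1)
  show p ∣ ∑ i ∈ Finset.range (2 * h + 1), q ^ i ↔ 7 ∣ 2 * h + 1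
  constructor
  · intro hd
    refine (main_dvd_iff (2 * h + 1)).mp ?_
    rw [← geom]
    exact hd.mul_right _
  · intro h7
    refine cop.dvd_of_dvd_mul_left ?_
    rw [mul_comm, geom]
    exact (main_dvd_iff (2 * h + 1)).mpr h7
end

section
/- In 𝔽₂[x], the polynomial 1 + M + ⋯ + M⁸ with M = x³ + x + 1 factors as (x²+x+1)(x⁴+x³+1)(x⁶+x+1)(x^{12}+x⁸+x⁷+x⁴+1), and x⁶+x+1 is irreducible but is not a Mersenne prime (not of the form 1 + x^a(x+1)^b with a, b ≥ 1). -/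
open Polynomial


lemma aux_no_small_factor (f : Polynomial (ZMod 2)) (h1 : 1 ≤ f.natDegree)
    (h3 : f.natDegree ≤ 3) (hdvd : f ∣ (X ^ 6 + X + 1 : Polynomial (ZMod 2))) : False := by
  obtain ⟨g, hg⟩ := hdvd
  have he0 : Polynomial.eval 0 (X ^ 6 + X + 1 : Polynomial (ZMod 2)) = 1 := by simp
  have he1 : Polynomial.eval 1 (X ^ 6 + X + 1 : Polynomial (ZMod 2)) = 1 := by
    simp; decide
  have hf0 : Polynomial.eval 0 f ≠ 0 := by
    intro h0; rw [hg] at he0; simp [h0] at he0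
  have hf1 : Polynomial.eval 1 f ≠ 0 := by
    intro h0; rw [hg] at he1; simp [h0] at he1
  have hrep : f = C (f.coeff 0) + C (f.coeff 1) * X + C (f.coeff 2) * X ^ 2
      + C (f.coeff 3) * X ^ 3 := by
    have := f.as_sum_range' 4 (by omega)
    conv_lhs => rw [this]
    simp only [Finset.sum_range_succ, Finset.sum_range_zero, ← C_mul_X_pow_eq_monomial]
    ring
  have two : ∀ c : ZMod 2, c = 0 ∨ c = 1 := by decide
  set c0 := f.coeff 0 with hc0def
  set c1 := f.coeff 1 with hc1def
  set c2 := f.coeff 2 with hc2def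
  set c3 := f.coeff 3 with hc3def
  have hc0 : c0 = 1 := by
    rcases two c0 with h | h
    · exfalso; apply hf0; rw [hrep, h]; simp
    · exact h
  have hev : Polynomial.eval 1 f = c0 + c1 + c2 + c3 := by rw [hrep]; simp
  have hsum : c1 + c2 + c3 = 0 := by
    rcases two (c1 + c2 + c3) with h | h
    · exact h
    · exfalso; apply hf1
      rw [hev, hc0, show (1 : ZMod 2) + c1 + c2 + c3 = (c1 + c2 + c3) + 1 by ring, h]
      decide
  have hXne : (X : Polynomial (ZMod 2)) ≠ 0 := X_ne_zero
  -- the three candidate cases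
  rcases two c1 with e1 | e1 <;> rcases two c2 with e2 | e2 <;> rcases two c3 with e3 | e3
  · -- 0,0,0 : f = 1, contradicts natDegree ≥ 1
    have : f = 1 := by rw [hrep, hc0, e1, e2, e3]; simp
    rw [this] at h1; simp at h1
  · rw [e1, e2, e3] at hsum; exact absurd hsum (by decide)
  · rw [e1, e2, e3] at hsum; exact absurd hsum (by decide)
  · -- f = X^3 + X^2 + 1, remainder X^2 + 1
    have hf : f = X ^ 3 + X ^ 2 + 1 := by
      rw [hrep, hc0, e1, e2, e3]; simp only [map_one, map_zero]; ring
    have hd : f ∣ (X ^ 2 + 1 : Polynomial (ZMod 2)) := by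
      have h2 : (X ^ 2 + 1 : Polynomial (ZMod 2))
          = (X ^ 6 + X + 1) - f * (X ^ 3 + X ^ 2 + X) := by
        rw [hf]; ring_nf; reduce_mod_char
      rw [h2]; exact dvd_sub ⟨g, hg⟩ (Dvd.intro _ rfl)
    have d1 : ((X : Polynomial (ZMod 2)) ^ 2 + 1).degree = 2 := by compute_degree!
    have d2 : ((X : Polynomial (ZMod 2)) ^ 3 + X ^ 2 + 1).degree = 3 := by compute_degree!
    have hz := Polynomial.eq_zero_of_dvd_of_degree_lt hd (by rw [hf, d1, d2]; decide)
    have := congrArg (Polynomial.coeff · 2) hz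
    simp [Polynomial.coeff_X, Polynomial.coeff_one] at this
  · rw [e1, e2, e3] at hsum; exact absurd hsum (by decide)
  · -- f = X^3 + X + 1, remainder X^2 + X
    have hf : f = X ^ 3 + X + 1 := by
      rw [hrep, hc0, e1, e2, e3]; simp only [map_one, map_zero]; ring
    have hd : f ∣ (X ^ 2 + X : Polynomial (ZMod 2)) := by
      have h2 : (X ^ 2 + X : Polynomial (ZMod 2))
          = (X ^ 6 + X + 1) - f * (X ^ 3 + X + 1) := by
        rw [hf]; ring_nf; reduce_mod_char
      rw [h2]; exact dvd_sub ⟨g, hg⟩ (Dvd.intro _ rfl)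
    have d1 : ((X : Polynomial (ZMod 2)) ^ 2 + X).degree = 2 := by compute_degree!
    have d2 : ((X : Polynomial (ZMod 2)) ^ 3 + X + 1).degree = 3 := by compute_degree!
    have hz := Polynomial.eq_zero_of_dvd_of_degree_lt hd (by rw [hf, d1, d2]; decide)
    have := congrArg (Polynomial.coeff · 2) hz
    simp [Polynomial.coeff_X, Polynomial.coeff_one] at this
  · -- f = X^2 + X + 1, remainder X
    have hf : f = X ^ 2 + X + 1 := by
      rw [hrep, hc0, e1, e2, e3]; simp only [map_one, map_zero]; ring
    have hd : f ∣ (X : Polynomial (ZMod 2)) := by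
      have h2 : (X : Polynomial (ZMod 2))
          = (X ^ 6 + X + 1) - f * (X ^ 4 + X ^ 3 + X + 1) := by
        rw [hf]; ring_nf; reduce_mod_char
      rw [h2]; exact dvd_sub ⟨g, hg⟩ (Dvd.intro _ rfl)
    have d2 : ((X : Polynomial (ZMod 2)) ^ 2 + X + 1).degree = 2 := by compute_degree!
    have hz := Polynomial.eq_zero_of_dvd_of_degree_lt hd (by rw [hf, degree_X, d2]; decide)
    exact hXne hz
  · rw [e1, e2, e3] at hsum; exact absurd hsum (by decide)

lemma irr6 : Irreducible (X ^ 6 + X + 1 : Polynomial (ZMod 2)) := by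
  have hp6 : (X ^ 6 + X + 1 : Polynomial (ZMod 2)).natDegree = 6 := by compute_degree!
  have hpne : (X ^ 6 + X + 1 : Polynomial (ZMod 2)) ≠ 0 := fun h => by
    have := congrArg (Polynomial.coeff · 6) h
    simp [Polynomial.coeff_X, Polynomial.coeff_one] at this
  constructor
  · intro hu
    have := Polynomial.natDegree_eq_zero_of_isUnit hu
    omega
  · intro f g hfg
    by_contra hc
    push_neg at hc
    obtain ⟨hf, hg⟩ := hc
    have hfne : f ≠ 0 := by rintro rfl; rw [zero_mul] at hfg; exact hpne hfg
    have hgne : g ≠ 0 := by rintro rfl; rw [mul_zero] at hfg; exact hpne hfg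
    have hmul : f.natDegree + g.natDegree = 6 := by
      rw [← Polynomial.natDegree_mul hfne hgne, ← hfg, hp6]
    have hdegf : 1 ≤ f.natDegree := by
      rcases Nat.eq_zero_or_pos f.natDegree with h0 | h
      · exfalso; apply hf
        have hC := Polynomial.eq_C_of_natDegree_eq_zero h0
        rw [hC]
        exact Polynomial.isUnit_C.2 (isUnit_iff_ne_zero.2 fun hc0 => hfne (by rw [hC, hc0, map_zero]))
      · exact h
    have hdegg : 1 ≤ g.natDegree := by
      rcases Nat.eq_zero_or_pos g.natDegree with h0 | h
      · exfalso; apply hg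
        have hC := Polynomial.eq_C_of_natDegree_eq_zero h0
        rw [hC]
        exact Polynomial.isUnit_C.2 (isUnit_iff_ne_zero.2 fun hc0 => hgne (by rw [hC, hc0, map_zero]))
      · exact h
    rcases le_or_gt f.natDegree 3 with h | h
    · exact aux_no_small_factor f hdegf h ⟨g, hfg⟩
    · exact aux_no_small_factor g hdegg (by omega) ⟨f, by rw [hfg]; ring⟩

lemma not_mersenne :
      ¬ ∃ a b : ℕ, 0 < a ∧ 0 < b ∧
        (X ^ 6 + X + 1 : Polynomial (ZMod 2)) = 1 + X ^ a * (X + 1) ^ b := by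
  rintro ⟨a, b, ha, hb, h⟩
  have hX : (X : Polynomial (ZMod 2)) ≠ 0 := X_ne_zero
  have hX1 : (X + 1 : Polynomial (ZMod 2)) ≠ 0 := by
    intro h0
    have := congrArg (Polynomial.coeff · 0) h0
    simp at this
  have key : (X : Polynomial (ZMod 2)) ^ a * (X + 1) ^ b
      = X * (X + 1) * (X ^ 4 + X ^ 3 + X ^ 2 + X + 1) := by
    have h1 : (X : Polynomial (ZMod 2)) ^ a * (X + 1) ^ b = X ^ 6 + X := by
      linear_combination -h
    rw [h1]; ring_nf; reduce_mod_char
  obtain ⟨a', rfl⟩ : ∃ a', a = a' + 1 := ⟨a - 1, by omega⟩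
  obtain ⟨b', rfl⟩ : ∃ b', b = b' + 1 := ⟨b - 1, by omega⟩
  rw [pow_succ, pow_succ] at key
  have key2 : (X : Polynomial (ZMod 2)) ^ a' * ((X + 1) ^ b' * (X + 1))
      = (X + 1) * (X ^ 4 + X ^ 3 + X ^ 2 + X + 1) := by
    apply mul_left_cancel₀ hX
    linear_combination key
  rcases Nat.eq_zero_or_pos a' with rfl | ha'
  · simp only [pow_zero, one_mul] at key2
    have key3 : ((X + 1 : Polynomial (ZMod 2))) ^ b' = X ^ 4 + X ^ 3 + X ^ 2 + X + 1 := by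
      apply mul_right_cancel₀ hX1
      rw [key2]; ring
    rcases Nat.eq_zero_or_pos b' with rfl | hb'
    · have := congrArg (Polynomial.coeff · 4) key3
      simp [Polynomial.coeff_X] at this
    · have := congrArg (Polynomial.eval 1) key3
      simp at this
      rw [show (1 : ZMod 2) + 1 = 0 by decide, zero_pow (by omega)] at this
      simp at this
      exact one_ne_zero this.symm
  · have : (X : Polynomial (ZMod 2)) ∣ (X + 1) * (X ^ 4 + X ^ 3 + X ^ 2 + X + 1) := by
      rw [← key2]
      exact Dvd.dvd.mul_right (dvd_pow_self X (by omega)) _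
    have := congrArg (Polynomial.eval 0) this.choose_spec
    simp at this

theorem sigma_M_eight_factorization :
    (∑ i ∈ Finset.range 9, (X ^ 3 + X + 1 : Polynomial (ZMod 2)) ^ i) =
        (X ^ 2 + X + 1) * (X ^ 4 + X ^ 3 + 1) * (X ^ 6 + X + 1) *
          (X ^ 12 + X ^ 8 + X ^ 7 + X ^ 4 + 1) ∧
      Irreducible (X ^ 6 + X + 1 : Polynomial (ZMod 2)) ∧
      ¬ ∃ a b : ℕ, 0 < a ∧ 0 < b ∧
        (X ^ 6 + X + 1 : Polynomial (ZMod 2)) = 1 + X ^ a * (X + 1) ^ b := by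
  refine ⟨?_, irr6, not_mersenne⟩
  simp only [Finset.sum_range_succ, Finset.sum_range_zero]
  ring_nf
  reduce_mod_char
end

section
/- There is no perfect polynomial over 𝔽₂ of the form S = P₁² ⋯ P_m² where each P_j is a distinct Mersenne prime over 𝔽₂. -/
open Polynomial

/-- Sum of all monic divisors of a polynomial over 𝔽₂. -/
noncomputable def polySigma (A : Polynomial (ZMod 2)) : Polynomial (ZMod 2) :=
  ∑ᶠ d ∈ {d : Polynomial (ZMod 2) | d.Monic ∧ d ∣ A}, d

/-!
Write `T = X² + X + 1` and let `ω` be the root of `T` in `𝔽₄ = 𝔽₂[X]/(T)`. Since `σ` is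
multiplicative, `σ(∏ Pⱼ²) = ∏ (1 + Pⱼ + Pⱼ²)`. For a Mersenne prime `P = 1 + z` with
`z = X^a (X+1)^b`, the value `z(ω)` is a cube root of unity, so in characteristic 2
`P(ω) (1 + P(ω) + P(ω)²) = 1 + z(ω)³ = 0`: `T` divides `P` or `σ(P²)`.

If `T` divides no `Pⱼ`, it divides every `σ(Pⱼ²)`, hence `σ(S) = S`, although it divides no
factor of `S`.
If `T` divides some `Pⱼ`, then `Pⱼ = T` and the irreducible `σ(T²) = X⁴ + X + 1` divides `S`,
so it is one of the `Pₖ`. But it is not of Mersenne form: `T` divides `X⁴ + X = X (X+1) T`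
and does not divide `X^a (X+1)^b`.
-/

theorem Polynomial.finite_setOf_monic_dvd {R : Type*} [CommRing R] [IsDomain R]
    [UniqueFactorizationMonoid R] {f : R[X]} (hf : f ≠ 0) :
    {g : R[X] | g.Monic ∧ g ∣ f}.Finite :=
  Set.finite_coe_iff.mp (@Finite.of_fintype _ (fintypeSubtypeMonicDvd f hf))

theorem Polynomial.injOn_mul_setOf_monic_dvd {R : Type*} [CommRing R] [IsDomain R]
    {f g : R[X]} (h : IsCoprime f g) :
    Set.InjOn (fun p : R[X] × R[X] => p.1 * p.2)
      ({d | d.Monic ∧ d ∣ f} ×ˢ {d | d.Monic ∧ d ∣ g}) := by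
  rintro ⟨d₁, d₂⟩ ⟨⟨hd₁, hd₁f⟩, hd₂, hd₂g⟩ ⟨e₁, e₂⟩ ⟨⟨he₁, he₁f⟩, he₂, he₂g⟩
    (hde : d₁ * d₂ = e₁ * e₂)
  have dvd_left : ∀ {a b c : R[X]}, a ∣ f → c ∣ g → a ∣ b * c → a ∣ b := fun ha hc habc =>
    ((h.of_isCoprime_of_dvd_left ha).of_isCoprime_of_dvd_right hc).dvd_of_dvd_mul_right habc
  obtain rfl : d₁ = e₁ := eq_of_monic_of_associated hd₁ he₁ <| associated_of_dvd_dvd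
    (dvd_left hd₁f he₂g (hde ▸ dvd_mul_right _ _)) (dvd_left he₁f hd₂g (hde ▸ dvd_mul_right _ _))
  exact Prod.ext rfl (mul_left_cancel₀ hd₁.ne_zero hde)

theorem zmod_two_eq_one_of_ne_zero : ∀ {z : ZMod 2}, z ≠ 0 → z = 1 := by decide

theorem zmod_two_monic_of_ne_zero {p : (ZMod 2)[X]} (hp : p ≠ 0) : p.Monic :=
  zmod_two_eq_one_of_ne_zero (leadingCoeff_ne_zero.mpr hp)

theorem eq_of_irreducible_of_dvd {p q : (ZMod 2)[X]} (hp : Irreducible p) (hq : Irreducible q)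
    (h : p ∣ q) : p = q :=
  eq_of_monic_of_associated (zmod_two_monic_of_ne_zero hp.ne_zero)
    (zmod_two_monic_of_ne_zero hq.ne_zero) (hp.associated_of_dvd hq h)

theorem setOf_monic_dvd_mul {f g : (ZMod 2)[X]} (hfg : f * g ≠ 0) :
    {d | d.Monic ∧ d ∣ f * g} = (fun p : (ZMod 2)[X] × (ZMod 2)[X] => p.1 * p.2) ''
      ({d | d.Monic ∧ d ∣ f} ×ˢ {d | d.Monic ∧ d ∣ g}) := by
  ext d
  constructor
  · rintro ⟨-, hd⟩
    obtain ⟨d₁, d₂, hd₁, hd₂, rfl⟩ := exists_dvd_and_dvd_of_dvd_mul hd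
    have h0 : d₁ * d₂ ≠ 0 := ne_zero_of_dvd_ne_zero hfg hd
    exact ⟨(d₁, d₂), ⟨⟨zmod_two_monic_of_ne_zero (left_ne_zero_of_mul h0), hd₁⟩,
      zmod_two_monic_of_ne_zero (right_ne_zero_of_mul h0), hd₂⟩, rfl⟩
  · rintro ⟨⟨d₁, d₂⟩, ⟨⟨hd₁, hd₁f⟩, hd₂, hd₂g⟩, rfl⟩
    exact ⟨hd₁.mul hd₂, mul_dvd_mul hd₁f hd₂g⟩

theorem polySigma_one : polySigma 1 = 1 := by
  have h : {d : (ZMod 2)[X] | d.Monic ∧ d ∣ 1} = {1} := by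
    ext d
    simp only [Set.mem_ofPred_eq, Set.mem_singleton_iff, ← isUnit_iff_dvd_one]
    exact ⟨fun ⟨hd, hu⟩ => hd.isUnit_iff.mp hu, by rintro rfl; exact ⟨monic_one, isUnit_one⟩⟩
  rw [polySigma, h, finsum_mem_singleton]

theorem polySigma_mul {f g : (ZMod 2)[X]} (hf : f ≠ 0) (hg : g ≠ 0) (h : IsCoprime f g) :
    polySigma (f * g) = polySigma f * polySigma g := by
  have hF := finite_setOf_monic_dvd hf
  have hG := finite_setOf_monic_dvd hg
  rw [polySigma, setOf_monic_dvd_mul (mul_ne_zero hf hg),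
    finsum_mem_image (injOn_mul_setOf_monic_dvd h),
    finsum_mem_eq_finite_toFinset_sum _ (hF.prod hG), ← Set.Finite.toFinset_prod hF hG,
    Finset.sum_product, polySigma, polySigma, finsum_mem_eq_finite_toFinset_sum _ hF,
    finsum_mem_eq_finite_toFinset_sum _ hG, Finset.sum_mul_sum]

theorem polySigma_prod {ι : Type*} (s : Finset ι) (f : ι → (ZMod 2)[X]) (hf : ∀ i ∈ s, f i ≠ 0)
    (hs : (s : Set ι).Pairwise (Function.onFun IsCoprime f)) :
    polySigma (∏ i ∈ s, f i) = ∏ i ∈ s, polySigma (f i) := by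
  classical
  induction s using Finset.induction_on with
  | empty => simpa using polySigma_one
  | insert a s ha ih =>
    rw [Finset.coe_insert, Set.pairwise_insert] at hs
    rw [Finset.prod_insert ha, Finset.prod_insert ha, polySigma_mul (hf a (s.mem_insert_self a))
      (Finset.prod_ne_zero_iff.mpr fun i hi => hf i (Finset.mem_insert_of_mem hi))
      (IsCoprime.prod_right fun i hi => (hs.2 i hi (fun h => ha (h ▸ hi))).1),
      ih (fun i hi => hf i (Finset.mem_insert_of_mem hi)) hs.1]

theorem polySigma_pow {P : (ZMod 2)[X]} (hP : Irreducible P) (n : ℕ) :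
    polySigma (P ^ n) = ∑ k ∈ Finset.range (n + 1), P ^ k := by
  have hPm : P.Monic := zmod_two_monic_of_ne_zero hP.ne_zero
  have hdiv : {d | d.Monic ∧ d ∣ P ^ n} = (P ^ ·) '' ↑(Finset.range (n + 1)) := by
    ext d
    simp only [Set.mem_ofPred_eq, dvd_prime_pow hP.prime, Set.mem_image, Finset.coe_range,
      Set.mem_Iio, Nat.lt_succ_iff]
    constructor
    · rintro ⟨hd, k, hk, hdk⟩
      exact ⟨k, hk, (eq_of_monic_of_associated hd (hPm.pow k) hdk).symm⟩
    · rintro ⟨k, hk, rfl⟩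
      exact ⟨hPm.pow k, k, hk, Associated.refl _⟩
  rw [polySigma, hdiv,
    finsum_mem_image (pow_injective_of_not_isUnit hP.not_isUnit hP.ne_zero).injOn,
    finsum_mem_coe_finset]

theorem polySigma_sq {P : (ZMod 2)[X]} (hP : Irreducible P) :
    polySigma (P ^ 2) = 1 + P + P ^ 2 := by
  rw [polySigma_pow hP, Finset.sum_range_succ, Finset.sum_range_succ, Finset.sum_range_one,
    pow_zero, pow_one]

theorem polySigma_prod_sq {ι : Type*} [Fintype ι] {P : ι → (ZMod 2)[X]}
    (hP : ∀ i, Irreducible (P i)) (hinj : Function.Injective P) :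
    polySigma (∏ i, P i ^ 2) = ∏ i, polySigma (P i ^ 2) :=
  polySigma_prod _ _ (fun i _ => pow_ne_zero 2 (hP i).ne_zero) fun i _ j _ hij =>
    ((hP i).coprime_iff_not_dvd.mpr fun h =>
      hij (hinj (eq_of_irreducible_of_dvd (hP i) (hP j) h))).pow

theorem irreducible_X_sq_add_X_add_one : Irreducible (X ^ 2 + X + 1 : (ZMod 2)[X]) := by
  refine irreducible_of_degree_le_three_of_not_isRoot ?_ fun x => ?_
  · rw [show (X ^ 2 + X + 1 : (ZMod 2)[X]).natDegree = 2 by compute_degree!]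
    decide
  · simp only [IsRoot, eval_add, eval_pow, eval_X, eval_one]
    fin_cases x <;> decide

theorem eq_X_sq_add_X_add_one_of_natDegree_eq_two {q : (ZMod 2)[X]} (hq : q.Monic)
    (h2 : q.natDegree = 2) (hroot : ∀ x, ¬ q.IsRoot x) : q = X ^ 2 + X + 1 := by
  have hq' : q = X ^ 2 + C (q.coeff 1) * X + C (q.coeff 0) := by
    conv_lhs => rw [hq.as_sum, h2]
    simp only [Finset.sum_range_succ, Finset.sum_range_zero, pow_zero, pow_one, mul_one]
    ring
  have hc₀ : q.coeff 0 = 1 := zmod_two_eq_one_of_ne_zero (coeff_zero_eq_eval_zero q ▸ hroot 0)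
  have hc₁ : q.coeff 1 = 1 := by
    have h1 := hroot 1
    rw [hq', hc₀] at h1
    simp only [IsRoot, eval_add, eval_pow, eval_X, eval_mul, eval_C, one_pow, mul_one] at h1
    have key : ∀ c : ZMod 2, ¬ 1 + c + 1 = 0 → c = 1 := by decide
    exact key _ h1
  rw [hq', hc₀, hc₁, C_1, one_mul]

theorem X_pow_four_add_X_add_one_eq :
    (X ^ 4 + X + 1 : (ZMod 2)[X]) = 1 + X * (X + 1) * (X ^ 2 + X + 1) := by
  linear_combination (-X ^ 3 - X ^ 2 : (ZMod 2)[X]) * CharTwo.two_eq_zero (R := (ZMod 2)[X])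

theorem irreducible_X_pow_four_add_X_add_one : Irreducible (X ^ 4 + X + 1 : (ZMod 2)[X]) := by
  have hdeg : (X ^ 4 + X + 1 : (ZMod 2)[X]).natDegree = 4 := by compute_degree!
  have hmonic : (X ^ 4 + X + 1 : (ZMod 2)[X]).Monic := by monicity!
  refine (hmonic.irreducible_iff_lt_natDegree_lt (by rintro h; simp [h] at hdeg)).mpr
    fun q hq hqdeg hdvd => ?_
  rw [hdeg, Finset.mem_Ioc] at hqdeg
  have hroot : ∀ x, ¬ q.IsRoot x := fun x hx => by
    have := hx.dvd hdvd
    simp only [IsRoot, eval_add, eval_pow, eval_X, eval_one] at this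
    revert this
    fin_cases x <;> decide
  obtain hq1 | hq2 : q.natDegree = 1 ∨ q.natDegree = 2 := by omega
  · obtain ⟨x, hx⟩ :=
      exists_root_of_degree_eq_one ((degree_eq_iff_natDegree_eq_of_pos one_pos).mpr hq1)
    exact hroot x hx
  · rw [eq_X_sq_add_X_add_one_of_natDegree_eq_two hq hq2 hroot, X_pow_four_add_X_add_one_eq,
      dvd_add_left (dvd_mul_left _ _)] at hdvd
    exact irreducible_X_sq_add_X_add_one.not_isUnit (isUnit_of_dvd_one hdvd)

theorem X_pow_four_add_X_add_one_ne (a b : ℕ) :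
    (X ^ 4 + X + 1 : (ZMod 2)[X]) ≠ 1 + X ^ a * (X + 1) ^ b := by
  intro h
  have hdvd : X ^ 2 + X + 1 ∣ (X : (ZMod 2)[X]) ^ a * (X + 1) ^ b := by
    rw [X_pow_four_add_X_add_one_eq, add_right_inj] at h
    exact h ▸ dvd_mul_left _ _
  have hT := irreducible_X_sq_add_X_add_one.prime
  have not_dvd_linear : ∀ p : (ZMod 2)[X], p.natDegree = 1 → ¬ X ^ 2 + X + 1 ∣ p :=
    fun p hp h => by
      have := natDegree_le_of_dvd h (ne_zero_of_natDegree_gt (hp ▸ zero_lt_one))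
      rw [hp, show (X ^ 2 + X + 1 : (ZMod 2)[X]).natDegree = 2 by compute_degree!] at this
      omega
  rcases hT.dvd_or_dvd hdvd with h | h
  · exact not_dvd_linear X natDegree_X (hT.dvd_of_dvd_pow h)
  · exact not_dvd_linear (X + 1) (by compute_degree!) (hT.dvd_of_dvd_pow h)

theorem X_sq_add_X_add_one_dvd_mersenne_mul (a b : ℕ) :
    X ^ 2 + X + 1 ∣ (1 + X ^ a * (X + 1) ^ b) *
      (1 + (1 + X ^ a * (X + 1) ^ b) + (1 + X ^ a * (X + 1) ^ b) ^ 2 : (ZMod 2)[X]) := by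
  set T : (ZMod 2)[X] := X ^ 2 + X + 1
  rw [← AdjoinRoot.mk_eq_zero]
  set ω := AdjoinRoot.root T
  have h2 : (2 : AdjoinRoot T) = 0 := by
    rw [← map_ofNat (AdjoinRoot.mk T) 2, CharTwo.two_eq_zero (R := (ZMod 2)[X]), map_zero]
  have hω : ω ^ 2 + ω + 1 = 0 := by
    have := AdjoinRoot.mk_self (f := T)
    simpa only [T, map_add, map_pow, map_one, AdjoinRoot.mk_X] using this
  have hz : (ω ^ a * (ω + 1) ^ b) ^ 3 = 1 := by
    have h₁ : ω ^ 3 = 1 := by linear_combination (ω - 1) * hω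
    have h₂ : (ω + 1) ^ 3 = 1 := by linear_combination ω * hω + (ω ^ 2 + ω) * h2
    rw [mul_pow, ← pow_mul, ← pow_mul, mul_comm a, mul_comm b, pow_mul, pow_mul, h₁, h₂,
      one_pow, one_pow, one_mul]
  simp only [map_mul, map_add, map_one, map_pow, AdjoinRoot.mk_X]
  set z := ω ^ a * (ω + 1) ^ b
  linear_combination hz + (2 + 3 * z + 2 * z ^ 2) * h2

theorem X_sq_add_X_add_one_dvd_or_dvd_polySigma_sq {P : (ZMod 2)[X]} (hP : Irreducible P)
    {a b : ℕ} (hab : P = 1 + X ^ a * (X + 1) ^ b) :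
    X ^ 2 + X + 1 ∣ P ∨ X ^ 2 + X + 1 ∣ polySigma (P ^ 2) := by
  rw [polySigma_sq hP]
  exact irreducible_X_sq_add_X_add_one.prime.dvd_or_dvd
    (hab ▸ X_sq_add_X_add_one_dvd_mersenne_mul a b)

theorem polySigma_X_sq_add_X_add_one_sq :
    polySigma ((X ^ 2 + X + 1) ^ 2) = X ^ 4 + X + 1 := by
  rw [polySigma_sq irreducible_X_sq_add_X_add_one]
  linear_combination
    (X ^ 3 + 2 * X ^ 2 + X + 1 : (ZMod 2)[X]) * CharTwo.two_eq_zero (R := (ZMod 2)[X])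

theorem no_special_perfect_mersenne :
    ¬ ∃ (m : ℕ) (P : Fin m → Polynomial (ZMod 2)), 0 < m ∧
      (∀ j, Irreducible (P j) ∧
        ∃ a b : ℕ, 0 < a ∧ 0 < b ∧ P j = 1 + X ^ a * (X + 1) ^ b) ∧
      Function.Injective P ∧
      polySigma (∏ j, (P j) ^ 2) = ∏ j, (P j) ^ 2 := by
  rintro ⟨m, P, hm, hP, hinj, hperf⟩
  rw [polySigma_prod_sq (fun j => (hP j).1) hinj] at hperf
  have hT := irreducible_X_sq_add_X_add_one
  have eq_factor : ∀ {p}, Irreducible p → p ∣ ∏ j, P j ^ 2 → ∃ j, p = P j := fun hp h => by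
    obtain ⟨j, -, hj⟩ := hp.prime.exists_mem_finset_dvd h
    exact ⟨j, eq_of_irreducible_of_dvd hp (hP j).1 (hp.prime.dvd_of_dvd_pow hj)⟩
  by_cases hTP : ∃ j, X ^ 2 + X + 1 ∣ P j
  · obtain ⟨j, hj⟩ := hTP
    have hU : X ^ 4 + X + 1 ∣ ∏ j, P j ^ 2 := by
      rw [← hperf, ← polySigma_X_sq_add_X_add_one_sq, eq_of_irreducible_of_dvd hT (hP j).1 hj]
      exact Finset.dvd_prod_of_mem _ (Finset.mem_univ j)
    obtain ⟨k, hk⟩ := eq_factor irreducible_X_pow_four_add_X_add_one hU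
    obtain ⟨a, b, -, -, hab⟩ := (hP k).2
    exact X_pow_four_add_X_add_one_ne a b (hk.trans hab)
  · rw [not_exists] at hTP
    obtain ⟨a, b, -, -, hab⟩ := (hP ⟨0, hm⟩).2
    have h0 := (X_sq_add_X_add_one_dvd_or_dvd_polySigma_sq (hP _).1 hab).resolve_left (hTP _)
    obtain ⟨j, hj⟩ := eq_factor hT (hperf ▸ h0.trans (Finset.dvd_prod_of_mem _ (Finset.mem_univ _)))
    exact hTP j (hj ▸ dvd_rfl)
end
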